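/- arXiv:1704.01898 — 2 statements merged into one kernel-verified Lean document; each statement's English description precedes it below -/
import Mathlib

section
/- Let u, w : ℝ^N → ℝ be Lipschitz continuous functions and let φ ∈ C_c^∞(B_1(0)) be a radial function on ℝ^n (n ≤ N, acting on the first n coordinates). Then the limit as ε → 0 of ∫_{ℝ^N} ∫_{B_1(0)} ε^{-2} (u(x+εh,y) − u(x,y))(w(x+εh,y) − w(x,y)) φ(h) dh dx dy equals (C/n) ∫_{ℝ^N} ∇_x u · ∇_x w dz, where C = ∫_{B_1(0)} φ(h)|h|² dh and ∇_x denotes the gradient in the first n variables. -/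
open MeasureTheory Set Metric Filter
open scoped ENNReal
noncomputable section

/-- ℝ^n as Euclidean space. -/
abbrev En (n : ℕ) := EuclideanSpace ℝ (Fin n)

/-- Distribution function of `u` : μ_u(t) = ℒ^n({u > t}). -/
def distFun {n : ℕ} (u : En n → ℝ) (t : ℝ) : ℝ := (volume {x : En n | t < u x}).toReal

/-- Decreasing rearrangement u*(s) = sup{t ≥ 0 : μ_u(t) > s}. -/
def decRearr {n : ℕ} (u : En n → ℝ) (s : ℝ) : ℝ := sSup {t : ℝ | 0 ≤ t ∧ s < distFun u t}

/-- Volume of the unit ball of ℝ^n. -/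
def omegaN (n : ℕ) : ℝ := (volume (ball (0 : En n) 1)).toReal

/-- Schwarz (spherically symmetric decreasing) rearrangement: u⋆(x) = u*(ω_n |x|^n). -/
def schwarz {n : ℕ} (u : En n → ℝ) (x : En n) : ℝ := decRearr u (omegaN n * ‖x‖ ^ n)

/-- Ω⋆ : the centered open ball with the same measure as Ω. -/
def schwarzSet {n : ℕ} (Ω : Set (En n)) : Set (En n) :=
  {x | omegaN n * ‖x‖ ^ n < (volume Ω).toReal}

/-- Steiner symmetrization in codimension n : Schwarz rearrangement of each slice x ↦ u(x,y). -/
def steiner {n m : ℕ} (u : En n × En m → ℝ) (z : En n × En m) : ℝ :=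
  schwarz (fun x => u (x, z.2)) z.1

/-- Steiner symmetrization of a set : each y-section replaced by the centered ball
of the same n-dimensional measure. -/
def steinerSet {n m : ℕ} (Ω : Set (En n × En m)) : Set (En n × En m) :=
  {z | omegaN n * ‖z.1‖ ^ n < (volume {x : En n | (x, z.2) ∈ Ω}).toReal}

/-- Gradient in the x-variables, ∇ₓu(x,y). -/
def gradx {n m : ℕ} (u : En n × En m → ℝ) (z : En n × En m) : En n :=
  gradient (fun x => u (x, z.2)) z.1

/-- Partial derivative in the y_i variable. -/
def dery {n m : ℕ} (u : En n × En m → ℝ) (i : Fin m) (z : En n × En m) : ℝ :=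
  deriv (fun t : ℝ => u (z.1, z.2 + t • EuclideanSpace.single i (1:ℝ))) 0

/-- Laplacian in the x-variables only. -/
def lapx {n m : ℕ} (u : En n × En m → ℝ) (z : En n × En m) : ℝ :=
  ∑ i : Fin n, iteratedDeriv 2 (fun t : ℝ => u (z.1 + t • EuclideanSpace.single i (1:ℝ), z.2)) 0

/-- Full Laplacian on ℝ^n × ℝ^m via coordinate second derivatives. -/
def lapFull {n m : ℕ} (u : En n × En m → ℝ) (z : En n × En m) : ℝ :=
  lapx u z + ∑ j : Fin m, iteratedDeriv 2 (fun t : ℝ => u (z.1, z.2 + t • EuclideanSpace.single j (1:ℝ))) 0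

/-- Full Dirichlet inner product density ∇u·∇w = ∇ₓu·∇ₓw + Σᵢ u_{yᵢ} w_{yᵢ}. -/
def gradDot {n m : ℕ} (u w : En n × En m → ℝ) (z : En n × En m) : ℝ :=
  (inner ℝ (gradx u z) (gradx w z) : ℝ) + ∑ i : Fin m, dery u i z * dery w i z

/-- An encoding of membership in W_0^{1,p}(Ω) for Ω ⊆ ℝ^n × ℝ^m :
`u ∈ Lᵖ`, a.e. differentiable with gradient in `Lᵖ`, vanishing outside Ω. -/
def memW1p0P {n m : ℕ} (p : ℝ≥0∞) (Ω : Set (En n × En m)) (u : En n × En m → ℝ) : Prop :=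
  MemLp u p volume ∧ (∀ᵐ z ∂(volume : Measure (En n × En m)), DifferentiableAt ℝ u z) ∧
    MemLp (fun z => ‖fderiv ℝ u z‖) p volume ∧ ∀ z ∉ Ω, u z = 0


/-! ### Auxiliary lemmas -/

-- integral invariance under linear isometry
lemma integral_comp_isometry {n : ℕ} (e : En n ≃ₗᵢ[ℝ] En n) (f : En n → ℝ) :
    ∫ h, f (e h) = ∫ h, f h :=
  (e.measurePreserving).integral_comp e.toHomeomorph.measurableEmbedding f

-- negation of coordinate i
def negCoord {n : ℕ} (i : Fin n) : En n ≃ₗᵢ[ℝ] En n :=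
  LinearIsometryEquiv.piLpCongrRight 2
    (fun k => if k = i then LinearIsometryEquiv.neg ℝ else LinearIsometryEquiv.refl ℝ ℝ)

lemma negCoord_apply {n : ℕ} (i k : Fin n) (h : En n) :
    negCoord i h k = if k = i then -h k else h k := by
  simp [negCoord, LinearIsometryEquiv.piLpCongrRight]
  split <;> simp

def swapCoord {n : ℕ} (i j : Fin n) : En n ≃ₗᵢ[ℝ] En n :=
  LinearIsometryEquiv.piLpCongrLeft 2 ℝ ℝ (Equiv.swap i j)

lemma swapCoord_apply {n : ℕ} (i j k : Fin n) (h : En n) :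
    swapCoord i j h k = h (Equiv.swap i j k) := by
  simp [swapCoord, LinearIsometryEquiv.piLpCongrLeft_apply, Equiv.piCongrLeft'_apply]

section Moment
variable {n : ℕ} (φ : En n → ℝ) (hφc : Continuous φ) (hφs : tsupport φ ⊆ ball (0 : En n) 1)
  (hφrad : ∀ h h' : En n, ‖h‖ = ‖h'‖ → φ h = φ h')

include hφs in
lemma phi_compact_supp : HasCompactSupport φ :=
  HasCompactSupport.of_support_subset_isCompact (isCompact_closedBall 0 1)
    ((subset_tsupport φ).trans (hφs.trans ball_subset_closedBall))

include hφc hφs in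
lemma momentIntegrable (g : En n → ℝ) (hg : Continuous g) :
    Integrable (fun h => φ h * g h) := by
  apply Continuous.integrable_of_hasCompactSupport (hφc.mul hg)
  exact (phi_compact_supp φ hφs).mul_right

include hφc hφs hφrad in
lemma moment_offdiag (i j : Fin n) (hij : i ≠ j) : ∫ h, φ h * (h i * h j) = 0 := by
  have key := integral_comp_isometry (negCoord i) (fun h => φ h * (h i * h j))
  have : ∀ h : En n, φ (negCoord i h) * (negCoord i h i * negCoord i h j)
      = - (φ h * (h i * h j)) := by
    intro h
    rw [hφrad (negCoord i h) h ((negCoord i).norm_map h),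
      negCoord_apply, negCoord_apply, if_pos rfl, if_neg hij.symm]
    ring
  simp only [this, integral_neg] at key
  linarith

include hφc hφs hφrad in
lemma moment_diag (i j : Fin n) : ∫ h, φ h * (h i * h i) = ∫ h, φ h * (h j * h j) := by
  have key := integral_comp_isometry (swapCoord i j) (fun h => φ h * (h i * h i))
  have : ∀ h : En n, φ (swapCoord i j h) * (swapCoord i j h i * swapCoord i j h i)
      = φ h * (h j * h j) := by
    intro h
    rw [hφrad (swapCoord i j h) h ((swapCoord i j).norm_map h),
      swapCoord_apply, Equiv.swap_apply_left]
  simp only [this] at key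
  linarith

lemma cont_proj {n : ℕ} (i : Fin n) : Continuous (fun h : En n => h i) :=
  (EuclideanSpace.proj i).continuous

include hφc hφs in
lemma moment_trace : ∑ i : Fin n, ∫ h, φ h * (h i * h i) = ∫ h, φ h * ‖h‖ ^ 2 := by
  rw [← integral_finset_sum _ (fun i _ =>
    momentIntegrable φ hφc hφs (fun h => h i * h i) ((cont_proj i).mul (cont_proj i)))]
  congr 1; ext h
  rw [← Finset.mul_sum]
  congr 1
  rw [← real_inner_self_eq_norm_sq]
  simp only [PiLp.inner_apply, RCLike.inner_apply, conj_trivial]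
end Moment

section Moment2
variable {n : ℕ} (φ : En n → ℝ) (hφc : Continuous φ) (hφs : tsupport φ ⊆ ball (0 : En n) 1)
  (hφrad : ∀ h h' : En n, ‖h‖ = ‖h'‖ → φ h = φ h')

include hφc hφs hφrad in
lemma moment_diag_val (hn : 0 < n) (i : Fin n) :
    ∫ h, φ h * (h i * h i) = (∫ h, φ h * ‖h‖ ^ 2) / n := by
  have htr := moment_trace φ hφc hφs
  have hall : ∀ j : Fin n, ∫ h, φ h * (h j * h j) = ∫ h, φ h * (h i * h i) :=
    fun j => moment_diag φ hφc hφs hφrad j i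
  rw [Finset.sum_congr rfl (fun j _ => hall j), Finset.sum_const, Finset.card_univ,
    Fintype.card_fin, nsmul_eq_mul] at htr
  have hn' : (n : ℝ) ≠ 0 := Nat.cast_ne_zero.mpr hn.ne'
  rw [← htr, mul_div_cancel_left₀ _ hn']

include hφc hφs hφrad in
lemma moment_main (hn : 0 < n) (a b : En n) :
    ∫ h, φ h * ((inner ℝ a h : ℝ) * (inner ℝ b h : ℝ))
      = ((∫ h, φ h * ‖h‖ ^ 2) / n) * (inner ℝ a b : ℝ) := by
  have hexp : ∀ h : En n, φ h * ((inner ℝ a h : ℝ) * (inner ℝ b h : ℝ))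
      = ∑ i : Fin n, ∑ j : Fin n, (a i * b j) * (φ h * (h i * h j)) := by
    intro h
    simp only [PiLp.inner_apply, RCLike.inner_apply, starRingEnd_apply, star_trivial]
    rw [Finset.sum_mul_sum, Finset.mul_sum]
    refine Finset.sum_congr rfl fun i _ => ?_
    rw [Finset.mul_sum]
    exact Finset.sum_congr rfl fun j _ => by ring
  simp only [hexp]
  rw [integral_finset_sum _ (fun i _ => integrable_finset_sum _ (fun j _ =>
    ((momentIntegrable φ hφc hφs (fun h => h i * h j) ((cont_proj i).mul (cont_proj j))).const_mul _)))]
  have key : ∀ i : Fin n, ∫ h : En n, ∑ j : Fin n, (a i * b j) * (φ h * (h i * h j))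
      = a i * b i * ((∫ h, φ h * ‖h‖ ^ 2) / n) := by
    intro i
    rw [integral_finset_sum _ (fun j _ =>
      ((momentIntegrable φ hφc hφs (fun h => h i * h j) ((cont_proj i).mul (cont_proj j))).const_mul _))]
    have step : ∀ j : Fin n, ∫ h : En n, (a i * b j) * (φ h * (h i * h j))
        = if j = i then a i * b i * ((∫ h, φ h * ‖h‖ ^ 2) / n) else 0 := by
      intro j
      rw [integral_const_mul]
      by_cases hji : j = i
      · subst hji; rw [if_pos rfl, moment_diag_val φ hφc hφs hφrad hn]
      · rw [if_neg hji, moment_offdiag φ hφc hφs hφrad i j (fun e => hji e.symm), mul_zero]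
    rw [Finset.sum_congr rfl (fun j _ => step j), Finset.sum_ite_eq' Finset.univ i,
      if_pos (Finset.mem_univ i)]
  have hib : (inner ℝ a b : ℝ) = ∑ i : Fin n, a i * b i := by
    simp [PiLp.inner_apply, RCLike.inner_apply]
    exact Finset.sum_congr rfl fun i _ => mul_comm _ _
  rw [Finset.sum_congr rfl (fun i _ => key i), ← Finset.sum_mul, mul_comm, hib]

include hφs in
lemma setInt_eq_int (g : En n → ℝ) :
    ∫ h in ball (0 : En n) 1, φ h * g h = ∫ h, φ h * g h := by
  apply setIntegral_eq_integral_of_forall_compl_eq_zero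
  intro h hh
  rw [image_eq_zero_of_notMem_tsupport (fun hmem => hh (hφs hmem)), zero_mul]
end Moment2

section Calc
variable {n m : ℕ}

lemma slice_hasFDeriv {u : En n × En m → ℝ} {z : En n × En m}
    (hd : DifferentiableAt ℝ u z) :
    HasFDerivAt (fun x => u (x, z.2)) ((fderiv ℝ u z).comp
      (ContinuousLinearMap.inl ℝ (En n) (En m))) z.1 := by
  have := (hd.hasFDerivAt).comp z.1 (hasFDerivAt_prodMk_left (𝕜 := ℝ) z.1 z.2)
  exact this

lemma gradx_inner {u : En n × En m → ℝ} {z : En n × En m}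
    (hd : DifferentiableAt ℝ u z) (h : En n) :
    (inner ℝ (gradx u z) h : ℝ) = fderiv ℝ u z (h, 0) := by
  have hfd := (slice_hasFDeriv hd).fderiv
  rw [gradx, gradient, hfd, InnerProductSpace.toDual_symm_apply]
  rfl

lemma quot_tendsto {u : En n × En m → ℝ} {z v : En n × En m}
    (hd : DifferentiableAt ℝ u z) :
    Tendsto (fun ε : ℝ => (u (z + ε • v) - u z) / ε) (nhdsWithin 0 (Set.Ioi 0))
      (nhds (fderiv ℝ u z v)) := by
  have hc : HasDerivAt (fun t : ℝ => z + t • v) v 0 := by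
    simpa using ((hasDerivAt_id (0:ℝ)).smul_const v).const_add z
  have h0 : z + (0:ℝ) • v = z := by simp
  have hg : HasDerivAt (fun t : ℝ => u (z + t • v)) (fderiv ℝ u z v) 0 :=
    HasFDerivAt.comp_hasDerivAt 0 (h0.symm ▸ hd.hasFDerivAt) hc
  have := hasDerivAt_iff_tendsto_slope.mp hg
  have hmono : nhdsWithin (0:ℝ) (Set.Ioi 0) ≤ nhdsWithin 0 {(0:ℝ)}ᶜ :=
    nhdsWithin_mono 0 (fun x hx => ne_of_gt hx)
  refine (this.mono_left hmono).congr' ?_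
  filter_upwards [self_mem_nhdsWithin] with ε (hε : 0 < ε)
  simp [slope_def_field, div_eq_inv_mul]
end Calc


instance {n m : ℕ} : (volume : Measure (En n × En m)).IsAddHaarMeasure :=
  MeasureTheory.Measure.prod.instIsAddHaarMeasure _ _

/-- discrete approximation of the mixed Dirichlet integral in the x-variables. -/
theorem discrete_gradx_limit {n m : ℕ} (hn : 0 < n)
    (u w : En n × En m → ℝ)
    (hul : ∃ K, LipschitzWith K u) (hwl : ∃ K, LipschitzWith K w)
    (huc : HasCompactSupport u) (hwc : HasCompactSupport w)
    (φ : En n → ℝ) (hφ : ContDiff ℝ (⊤ : ℕ∞) φ) (hφs : tsupport φ ⊆ ball (0 : En n) 1)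
    (hφrad : ∀ h h' : En n, ‖h‖ = ‖h'‖ → φ h = φ h') :
    Tendsto
      (fun ε : ℝ => ∫ z : En n × En m, ∫ h in ball (0 : En n) 1,
        (u (z.1 + ε • h, z.2) - u z) * (w (z.1 + ε • h, z.2) - w z) * φ h / ε ^ 2)
      (nhdsWithin 0 (Ioi 0))
      (nhds (((∫ h in ball (0 : En n) 1, φ h * ‖h‖ ^ 2) / n) *

        ∫ z : En n × En m, (inner ℝ (gradx u z) (gradx w z) : ℝ))) := by
  obtain ⟨Ku, hKu⟩ := hul
  obtain ⟨Kw, hKw⟩ := hwl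
  have hφc : Continuous φ := hφ.continuous
  obtain ⟨Mφ, hMφ⟩ := (phi_compact_supp φ hφs).exists_bound_of_continuous hφc
  have hMφ' : ∀ h, |φ h| ≤ Mφ := fun h => hMφ h
  set B : ℝ := Ku * Kw * Mφ with hBdef
  have hMφ0 : 0 ≤ Mφ := le_trans (abs_nonneg _) (hMφ' 0)
  have hB0 : 0 ≤ B := by positivity
  -- Lipschitz difference bound
  have hlip : ∀ (K : NNReal) (f : En n × En m → ℝ), LipschitzWith K f →
      ∀ (ε : ℝ) (z : En n × En m) (h : En n),
      |f (z.1 + ε • h, z.2) - f z| ≤ K * (|ε| * ‖h‖) := by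
    intro K f hf ε z h
    have hd : dist ((z.1 + ε • h, z.2) : En n × En m) z = |ε| * ‖h‖ := by
      rw [Prod.dist_eq]
      simp [dist_self, dist_comm, norm_smul]
      positivity
    have := hf.dist_le_mul (z.1 + ε • h, z.2) z
    rwa [Real.dist_eq, hd] at this
  -- uniform bound on the inner integrand
  have hψbound : ∀ (ε : ℝ) (z : En n × En m) (h : En n), ‖h‖ ≤ 1 →
      |(u (z.1 + ε • h, z.2) - u z) * (w (z.1 + ε • h, z.2) - w z) * φ h / ε ^ 2| ≤ B := by
    intro ε z h hh
    rcases eq_or_ne ε 0 with hε | hε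
    · simp [hε, hB0]
    · have h1 := hlip Ku u hKu ε z h
      have h2 := hlip Kw w hKw ε z h
      have hε2 : (0:ℝ) < ε ^ 2 := by positivity
      rw [abs_div, abs_mul, abs_mul, abs_of_nonneg (sq_nonneg ε), div_le_iff₀ hε2]
      have h3 : |u (z.1 + ε • h, z.2) - u z| * |w (z.1 + ε • h, z.2) - w z| * |φ h|
          ≤ ((Ku : ℝ) * (|ε| * ‖h‖)) * ((Kw : ℝ) * (|ε| * ‖h‖)) * Mφ :=
        mul_le_mul (mul_le_mul h1 h2 (abs_nonneg _) (by positivity)) (hMφ' h)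
          (abs_nonneg _) (by positivity)
      refine le_trans h3 ?_
      have hee : |ε| * |ε| = ε ^ 2 := by rw [abs_mul_abs_self]; ring
      have heq : ((Ku : ℝ) * (|ε| * ‖h‖)) * ((Kw : ℝ) * (|ε| * ‖h‖)) * Mφ
          = ((Ku : ℝ) * Kw * Mφ) * (‖h‖ * ‖h‖) * (|ε| * |ε|) := by ring
      rw [heq, hee]
      have hle : ((Ku : ℝ) * Kw * Mφ) * (‖h‖ * ‖h‖) ≤ ((Ku : ℝ) * Kw * Mφ) * 1 := by
        apply mul_le_mul_of_nonneg_left _ (by positivity)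
        calc ‖h‖ * ‖h‖ ≤ 1 * 1 := mul_le_mul hh hh (norm_nonneg _) zero_le_one
          _ = 1 := one_mul 1
      calc ((Ku : ℝ) * Kw * Mφ) * (‖h‖ * ‖h‖) * ε ^ 2
          ≤ ((Ku : ℝ) * Kw * Mφ) * 1 * ε ^ 2 :=
            mul_le_mul_of_nonneg_right hle (le_of_lt hε2)
        _ = B * ε ^ 2 := by rw [hBdef]; ring
  set S : Set (En n × En m) := cthickening 1 (tsupport u) with hSdef
  have hSc : IsCompact S := huc.cthickening
  have hSm : MeasurableSet S := isClosed_cthickening.measurableSet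
  set V : ℝ := (volume (ball (0 : En n) 1)).toReal with hVdef
  -- vanishing of the inner integrand away from S
  have hzero : ∀ (ε : ℝ), |ε| ≤ 1 → ∀ z ∉ S, ∀ h ∈ ball (0:En n) 1,
      (u (z.1 + ε • h, z.2) - u z) * (w (z.1 + ε • h, z.2) - w z) * φ h / ε ^ 2 = 0 := by
    intro ε hε z hz h hh
    have h1 : u z = 0 :=
      image_eq_zero_of_notMem_tsupport (fun hm => hz (self_subset_cthickening _ hm))
    have h2 : u (z.1 + ε • h, z.2) = 0 := by
      apply image_eq_zero_of_notMem_tsupport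
      intro hm
      apply hz
      apply mem_cthickening_of_dist_le z (z.1 + ε • h, z.2) 1 _ hm
      have hd : dist z ((z.1 + ε • h, z.2) : En n × En m) = |ε| * ‖h‖ := by
        rw [Prod.dist_eq]
        simp [dist_self, dist_comm, norm_smul]
        positivity
      rw [hd]
      have : ‖h‖ ≤ 1 := le_of_lt (mem_ball_zero_iff.mp hh)
      calc |ε| * ‖h‖ ≤ 1 * 1 := by
            apply mul_le_mul hε this (norm_nonneg _) zero_le_one
        _ = 1 := by ring
    rw [h2, h1]
    ring
  -- continuity of inner integrals in z
  have hcontz : ∀ ε : ℝ, Continuous (fun z : En n × En m =>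
      ∫ h in ball (0 : En n) 1,
        (u (z.1 + ε • h, z.2) - u z) * (w (z.1 + ε • h, z.2) - w z) * φ h / ε ^ 2) := by
    intro ε
    apply continuous_of_dominated (bound := fun _ => B)
    · intro z
      apply Continuous.aestronglyMeasurable
      have hmap : Continuous (fun h : En n => ((z.1 + ε • h, z.2) : En n × En m)) :=
        (continuous_const.add (continuous_id.const_smul ε)).prodMk continuous_const
      exact ((((hKu.continuous.comp hmap).sub continuous_const).mul
        ((hKw.continuous.comp hmap).sub continuous_const)).mul hφc).div_const _
    · intro z
      filter_upwards [ae_restrict_mem measurableSet_ball] with h hh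
      exact hψbound ε z h (le_of_lt (mem_ball_zero_iff.mp hh))
    · exact integrableOn_const measure_ball_lt_top.ne
    · filter_upwards with h
      have hmap : Continuous (fun z : En n × En m => ((z.1 + ε • h, z.2) : En n × En m)) :=
        (continuous_fst.add continuous_const).prodMk continuous_snd
      exact ((((hKu.continuous.comp hmap).sub hKu.continuous).mul
        ((hKw.continuous.comp hmap).sub hKw.continuous)).mul continuous_const).div_const _
  -- main dominated convergence in z
  rw [← integral_const_mul]
  apply MeasureTheory.tendsto_integral_filter_of_dominated_convergence
    (bound := S.indicator (fun _ => B * V))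
    (f := fun z => ((∫ h in ball (0 : En n) 1, φ h * ‖h‖ ^ 2) / n) *
      (inner ℝ (gradx u z) (gradx w z) : ℝ))
  · filter_upwards with ε
    exact (hcontz ε).aestronglyMeasurable
  · filter_upwards [Ioc_mem_nhdsGT_of_mem (Set.mem_Ico.mpr ⟨le_refl (0:ℝ), zero_lt_one⟩)]
      with ε hε
    filter_upwards with z
    by_cases hz : z ∈ S
    · rw [Set.indicator_of_mem hz]
      apply norm_setIntegral_le_of_norm_le_const measure_ball_lt_top
      intro h hh
      exact hψbound ε z h (le_of_lt (mem_ball_zero_iff.mp hh))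
    · rw [Set.indicator_of_notMem hz]
      have hε1 : |ε| ≤ 1 := by
        rw [abs_of_pos hε.1]; exact hε.2
      have : ∫ h in ball (0 : En n) 1,
          (u (z.1 + ε • h, z.2) - u z) * (w (z.1 + ε • h, z.2) - w z) * φ h / ε ^ 2
          = ∫ _h in ball (0 : En n) 1, (0:ℝ) :=
        setIntegral_congr_fun measurableSet_ball (fun h hh => hzero ε hε1 z hz h hh)
      rw [this, integral_zero, norm_zero]
  · exact (integrable_indicator_iff hSm).mpr
      (integrableOn_const hSc.measure_lt_top.ne)
  · filter_upwards [hKu.ae_differentiableAt, hKw.ae_differentiableAt] with z hdu hdw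
    -- inner dominated convergence in h
    have key : Tendsto (fun ε : ℝ => ∫ h in ball (0 : En n) 1,
        (u (z.1 + ε • h, z.2) - u z) * (w (z.1 + ε • h, z.2) - w z) * φ h / ε ^ 2)
        (nhdsWithin 0 (Ioi 0))
        (nhds (∫ h in ball (0 : En n) 1,
          φ h * ((inner ℝ (gradx u z) h : ℝ) * (inner ℝ (gradx w z) h : ℝ)))) := by
      apply MeasureTheory.tendsto_integral_filter_of_dominated_convergence
        (bound := fun _ => B)
      · filter_upwards with ε
        apply Continuous.aestronglyMeasurable
        have hmap : Continuous (fun h : En n => ((z.1 + ε • h, z.2) : En n × En m)) :=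
          (continuous_const.add (continuous_id.const_smul ε)).prodMk continuous_const
        exact ((((hKu.continuous.comp hmap).sub continuous_const).mul
          ((hKw.continuous.comp hmap).sub continuous_const)).mul hφc).div_const _
      · filter_upwards with ε
        filter_upwards [ae_restrict_mem measurableSet_ball] with h hh
        exact hψbound ε z h (le_of_lt (mem_ball_zero_iff.mp hh))
      · exact integrableOn_const measure_ball_lt_top.ne
      · filter_upwards with h
        have hpt : ∀ ε : ℝ, ((z.1 + ε • h, z.2) : En n × En m)
            = z + ε • ((h, 0) : En n × En m) := by
          intro ε
          apply Prod.ext <;> simp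
        have hTu := quot_tendsto (v := ((h, 0) : En n × En m)) hdu
        have hTw := quot_tendsto (v := ((h, 0) : En n × En m)) hdw
        have hT := (hTu.mul hTw).mul_const (φ h)
        have hval : fderiv ℝ u z ((h, 0) : En n × En m) * fderiv ℝ w z ((h, 0) : En n × En m)
            * φ h = φ h * ((inner ℝ (gradx u z) h : ℝ) * (inner ℝ (gradx w z) h : ℝ)) := by
          rw [gradx_inner hdu h, gradx_inner hdw h]; ring
        rw [hval] at hT
        apply hT.congr'
        filter_upwards [self_mem_nhdsWithin] with ε (hε : (0:ℝ) < ε)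
        have hεne : ε ≠ 0 := ne_of_gt hε
        have halg : ∀ A C : ℝ, A / ε * (C / ε) * φ h = A * C * φ h / ε ^ 2 := by
          intro A C; rw [div_mul_div_comm, ← sq, div_mul_eq_mul_div]
        rw [hpt ε]
        exact halg _ _
    have hval2 : ∫ h in ball (0 : En n) 1,
        φ h * ((inner ℝ (gradx u z) h : ℝ) * (inner ℝ (gradx w z) h : ℝ))
        = ((∫ h in ball (0 : En n) 1, φ h * ‖h‖ ^ 2) / n) *
          (inner ℝ (gradx u z) (gradx w z) : ℝ) := by
      rw [setInt_eq_int φ hφs, setInt_eq_int φ hφs]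
      exact moment_main φ hφc hφs hφrad hn _ _
    rwa [hval2] at key
end
end

section
/- Let u, w : ℝ^N → [0,∞) be Lipschitz continuous, compactly supported and suppose ∫ u w dz = ∫ u^# w^# dz. Then for each i = 1,…,m, ∫_{ℝ^N} u_{y_i} w_{y_i} dz ≥ ∫_{ℝ^N} (u^#)_{y_i} (w^#)_{y_i} dz, where subscripts denote partial derivatives in the y-variables. -/
open MeasureTheory Set Metric Filter
open scoped ENNReal
noncomputable section

/-!
For `t > 0` and the unit vector `v = (0, eᵢ)`, expanding the product gives
`∫ (u(z+tv) - u z)(w(z+tv) - w z) = 2 ∫ u w - ∫ u(z+tv) w(z) - ∫ u(z-tv) w(z)`.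
Translations in `y` commute with Steiner symmetrization, so the Hardy–Littlewood inequality
bounds both translated terms by their symmetrized counterparts, while by hypothesis the first
terms agree. Hence the second differences of `u^#, w^#` integrate to at most those of `u, w`;
dividing by `t²` and letting `t → 0⁺` (dominated convergence, everything being Lipschitz along
`v`) gives the inequality for the derivatives.

Hardy–Littlewood is proved slice by slice with the layer-cake formula: the superlevel sets of a
Schwarz rearrangement are concentric balls of the same measures as the original ones. For `n = 0`
the symmetrizations vanish, so the hypothesis forces `u w = 0`, and then both sides are `0`.
-/

open scoped NNReal Topology

section Rearrangement

variable {n : ℕ} {f g : En n → ℝ} {s t : ℝ}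

lemma volume_setOf_lt_lt_top (hfc : HasCompactSupport f) (ht : 0 ≤ t) :
    volume {x | t < f x} < ∞ :=
  (measure_mono fun _ hx => subset_tsupport f (ht.trans_lt hx).ne').trans_lt hfc.measure_lt_top

lemma distFun_nonneg : 0 ≤ distFun f t := ENNReal.toReal_nonneg

lemma distFun_le_distFun (hfc : HasCompactSupport f) {t' : ℝ} (ht : 0 ≤ t) (htt' : t ≤ t') :
    distFun f t' ≤ distFun f t :=
  ENNReal.toReal_mono (volume_setOf_lt_lt_top hfc ht).ne
    (measure_mono fun _ hx => htt'.trans_lt hx)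

lemma distFun_eq_zero (h : ∀ x, f x ≤ t) : distFun f t = 0 := by
  simp [distFun, fun x => not_lt.2 (h x)]

lemma distFun_le_of_support_subset {K : Set (En n)} (hK : Function.support f ⊆ K)
    (hKfin : volume K ≠ ∞) (ht : 0 ≤ t) : distFun f t ≤ (volume K).toReal :=
  ENNReal.toReal_mono hKfin (measure_mono fun _ hx => hK (ht.trans_lt hx).ne')

lemma bddAbove_setOf_lt_distFun (hf : BddAbove (range f)) (hs : 0 ≤ s) :
    BddAbove {t | 0 ≤ t ∧ s < distFun f t} := by
  obtain ⟨M, hM⟩ := hf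
  refine ⟨M, fun t ⟨_, hst⟩ => ?_⟩
  have hne : volume {x | t < f x} ≠ 0 := fun h0 => by
    simp [distFun, h0] at hst
    linarith
  obtain ⟨x, hx⟩ := nonempty_of_measure_ne_zero hne
  exact hx.le.trans (hM (mem_range_self x))

lemma decRearr_nonneg : 0 ≤ decRearr f s := Real.sSup_nonneg fun _ ht => ht.1

lemma exists_lt_distFun_of_lt_distFun (hfc : HasCompactSupport f) (ht : 0 ≤ t)
    (hs : s < distFun f t) : ∃ t' > t, s < distFun f t' := by
  rcases lt_or_ge s 0 with hs0 | hs0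
  · exact ⟨t + 1, by linarith, hs0.trans_le distFun_nonneg⟩
  have hpos : ∀ k : ℕ, 0 < 1 / ((k : ℝ) + 1) := fun k => Nat.one_div_pos_of_nat
  let A : ℕ → Set (En n) := fun k => {x | t + 1 / ((k : ℝ) + 1) < f x}
  have hA : Monotone A := fun i j hij x (hx : t + _ < f x) =>
    show t + _ < f x from (add_le_add_right (Nat.one_div_le_one_div hij) t).trans_lt hx
  have hunion : ⋃ k, A k = {x | t < f x} := by
    ext x
    simp only [A, mem_iUnion, mem_ofPred_eq]
    refine ⟨fun ⟨k, hk⟩ => (lt_add_of_pos_right t (hpos k)).trans hk, fun hx => ?_⟩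
    obtain ⟨k, hk⟩ := exists_nat_one_div_lt (sub_pos.2 hx)
    exact ⟨k, by linarith⟩
  have hlt : ENNReal.ofReal s < volume (⋃ k, A k) := by
    rw [hunion, ENNReal.ofReal_lt_iff_lt_toReal hs0 (volume_setOf_lt_lt_top hfc ht).ne]
    exact hs
  obtain ⟨k, hk⟩ := ((tendsto_measure_iUnion_atTop hA).eventually (lt_mem_nhds hlt)).exists
  refine ⟨t + 1 / ((k : ℝ) + 1), lt_add_of_pos_right t (hpos k), ?_⟩
  exact (ENNReal.ofReal_lt_iff_lt_toReal hs0
    (volume_setOf_lt_lt_top hfc (ht.trans (lt_add_of_pos_right t (hpos k)).le)).ne).1 hk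

lemma lt_decRearr_iff (hfc : HasCompactSupport f) (hf : BddAbove (range f)) (hs : 0 ≤ s)
    (ht : 0 ≤ t) : t < decRearr f s ↔ s < distFun f t := by
  constructor
  · intro hlt
    have hne : {t | 0 ≤ t ∧ s < distFun f t}.Nonempty := by
      by_contra hempty
      rw [not_nonempty_iff_eq_empty] at hempty
      simp only [decRearr, hempty, Real.sSup_empty] at hlt
      linarith
    obtain ⟨a, ⟨_, ha⟩, hta⟩ := exists_lt_of_lt_csSup hne hlt
    exact ha.trans_le (distFun_le_distFun hfc ht hta.le)
  · intro hst
    obtain ⟨t', htt', hst'⟩ := exists_lt_distFun_of_lt_distFun hfc ht hst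
    exact htt'.trans_le
      (le_csSup (bddAbove_setOf_lt_distFun hf hs) ⟨ht.trans htt'.le, hst'⟩)

lemma decRearr_le_iff (hfc : HasCompactSupport f) (hf : BddAbove (range f)) (hs : 0 ≤ s)
    (ht : 0 ≤ t) : decRearr f s ≤ t ↔ distFun f t ≤ s := by
  simpa only [not_lt] using (lt_decRearr_iff hfc hf hs ht).not

lemma decRearr_eq_zero_of_support_subset {K : Set (En n)} (hK : Function.support f ⊆ K)
    (hKfin : volume K ≠ ∞) (hs : (volume K).toReal ≤ s) : decRearr f s = 0 :=
  le_antisymm (Real.sSup_nonpos fun t ⟨ht, hst⟩ =>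
    absurd (distFun_le_of_support_subset hK hKfin ht) (by linarith)) decRearr_nonneg

lemma decRearr_le_decRearr_add {c : ℝ} (hgc : HasCompactSupport g) (hg : BddAbove (range g))
    (hc : 0 ≤ c) (hs : 0 ≤ s) (hfg : ∀ x, f x ≤ g x + c) :
    decRearr f s ≤ decRearr g s + c := by
  refine Real.sSup_le (fun t ⟨_, hst⟩ => ?_) (add_nonneg decRearr_nonneg hc)
  rcases le_or_gt t c with htc | htc
  · linarith [decRearr_nonneg (f := g) (s := s)]
  have hdist : distFun f t ≤ distFun g (t - c) :=
    ENNReal.toReal_mono (volume_setOf_lt_lt_top hgc (by linarith)).ne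
      (measure_mono fun x (hx : t < f x) => show t - c < g x by linarith [hfg x])
  have := le_csSup (bddAbove_setOf_lt_distFun hg hs)
    (show t - c ∈ {t | 0 ≤ t ∧ s < distFun g t} from ⟨by linarith, hst.trans_le hdist⟩)
  rw [decRearr]
  linarith

lemma exists_eq_zero_of_hasCompactSupport (hn : 1 ≤ n) (hfc : HasCompactSupport f) :
    ∃ x, f x = 0 := by
  have : Nonempty (Fin n) := ⟨⟨0, hn⟩⟩
  obtain ⟨x, hx⟩ := (ne_univ_iff_exists_notMem _).1 hfc.isCompact.ne_univ
  exact ⟨x, image_eq_zero_of_notMem_tsupport hx⟩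

/-- Between two levels below its maximum, a continuous function on the connected space `ℝⁿ`
takes all intermediate values on a nonempty open set, so its distribution function drops. -/
lemma distFun_lt_distFun (hn : 1 ≤ n) (hf : Continuous f) (hfc : HasCompactSupport f)
    {t' : ℝ} (ht : 0 ≤ t) (htt' : t < t') (hmax : ∃ x, t' < f x) :
    distFun f t' < distFun f t := by
  obtain ⟨a, ha⟩ := hmax
  obtain ⟨b, hb⟩ := exists_eq_zero_of_hasCompactSupport hn hfc
  obtain ⟨x₀, hx₀⟩ := intermediate_value_univ b a hf
    (show (t + t') / 2 ∈ Icc (f b) (f a) by constructor <;> linarith)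
  let O := f ⁻¹' Ioo t t'
  have hO : 0 < volume O := (isOpen_Ioo.preimage hf).measure_pos volume
    ⟨x₀, show f x₀ ∈ Ioo t t' by rw [hx₀]; constructor <;> linarith⟩
  have hdisj : Disjoint O {x | t' < f x} :=
    disjoint_left.2 fun x (hx : f x ∈ Ioo t t') (hx' : t' < f x) => hx.2.not_gt hx'
  have hsub : O ∪ {x | t' < f x} ⊆ {x | t < f x} := union_subset
    (fun x (hx : f x ∈ Ioo t t') => hx.1) fun x (hx : t' < f x) => htt'.trans hx
  have hfin' := volume_setOf_lt_lt_top hfc (ht.trans htt'.le)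
  refine (ENNReal.toReal_lt_toReal hfin'.ne (volume_setOf_lt_lt_top hfc ht).ne).2 ?_
  calc volume {x | t' < f x} < volume {x | t' < f x} + volume O :=
        ENNReal.lt_add_right hfin'.ne hO.ne'
    _ = volume (O ∪ {x | t' < f x}) := by
        rw [add_comm, measure_union hdisj (measurableSet_lt measurable_const hf.measurable)]
    _ ≤ volume {x | t < f x} := measure_mono hsub

lemma continuousOn_decRearr (hn : 1 ≤ n) (hf : Continuous f) (hfc : HasCompactSupport f) :
    ContinuousOn (decRearr f) (Ici 0) := by
  have hbdd := hf.bddAbove_range_of_hasCompactSupport hfc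
  intro s₀ (hs₀ : 0 ≤ s₀)
  refine tendsto_order.2 ⟨fun a ha => ?_, fun a ha => ?_⟩
  · rcases lt_or_ge a 0 with ha0 | ha0
    · exact .of_forall fun _ => ha0.trans_le decRearr_nonneg
    filter_upwards [self_mem_nhdsWithin, nhdsWithin_le_nhds
      (gt_mem_nhds ((lt_decRearr_iff hfc hbdd hs₀ ha0).1 ha))] with s (hs : 0 ≤ s) hlt
    exact (lt_decRearr_iff hfc hbdd hs ha0).2 hlt
  · obtain ⟨b, hb, hba⟩ := exists_between ha
    obtain ⟨c, hbc, hca⟩ := exists_between hba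
    have hb0 : 0 ≤ b := decRearr_nonneg.trans hb.le
    have hc0 : 0 ≤ c := hb0.trans hbc.le
    have hdist : ∀ᶠ s in 𝓝[Ici 0] s₀, distFun f c ≤ s := by
      by_cases hmax : ∃ x, c < f x
      · have hlt := (distFun_lt_distFun hn hf hfc hb0 hbc hmax).trans_le
          ((decRearr_le_iff hfc hbdd hs₀ hb0).1 hb.le)
        filter_upwards [nhdsWithin_le_nhds (lt_mem_nhds hlt)] with s hs using hs.le
      · push Not at hmax
        filter_upwards [self_mem_nhdsWithin] with s (hs : 0 ≤ s)
        rwa [distFun_eq_zero hmax]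
    filter_upwards [self_mem_nhdsWithin, hdist] with s (hs : 0 ≤ s) hcs
    exact ((decRearr_le_iff hfc hbdd hs hc0).2 hcs).trans_lt hca

lemma omegaN_mul_norm_pow_nonneg (x : En n) : 0 ≤ omegaN n * ‖x‖ ^ n :=
  mul_nonneg ENNReal.toReal_nonneg (by positivity)

lemma continuous_schwarz (hn : 1 ≤ n) (hf : Continuous f) (hfc : HasCompactSupport f) :
    Continuous (schwarz f) :=
  (continuousOn_decRearr hn hf hfc).comp_continuous (by fun_prop) omegaN_mul_norm_pow_nonneg

lemma omegaN_pos : 0 < omegaN n :=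
  ENNReal.toReal_pos (isOpen_ball.measure_pos volume ⟨0, mem_ball_self one_pos⟩).ne'
    measure_ball_lt_top.ne

lemma setOf_omegaN_mul_norm_pow_lt (hn : 1 ≤ n) {c : ℝ} (hc : 0 < c) :
    {x : En n | omegaN n * ‖x‖ ^ n < c} = ball 0 ((c / omegaN n) ^ (n : ℝ)⁻¹) := by
  ext x
  rw [mem_ofPred_eq, mem_ball_zero_iff, Real.lt_rpow_inv_iff_of_pos (norm_nonneg x)
    (div_pos hc omegaN_pos).le (by exact_mod_cast hn), Real.rpow_natCast,
    lt_div_iff₀' omegaN_pos]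

lemma volume_setOf_omegaN_mul_norm_pow_lt (hn : 1 ≤ n) (c : ℝ) :
    volume {x : En n | omegaN n * ‖x‖ ^ n < c} = ENNReal.ofReal c := by
  rcases le_or_gt c 0 with hc | hc
  · have : {x : En n | omegaN n * ‖x‖ ^ n < c} = ∅ :=
      eq_empty_of_forall_notMem fun x hx => (omegaN_mul_norm_pow_nonneg x).not_gt (hx.trans_le hc)
    rw [this, measure_empty, ENNReal.ofReal_of_nonpos hc]
  have : Nonempty (Fin n) := ⟨⟨0, hn⟩⟩
  have hcω : 0 < c / omegaN n := div_pos hc omegaN_pos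
  have hball : volume (ball (0 : En n) 1) = ENNReal.ofReal (omegaN n) :=
    (ENNReal.ofReal_toReal measure_ball_lt_top.ne).symm
  rw [setOf_omegaN_mul_norm_pow_lt hn hc, Measure.addHaar_ball volume 0 (by positivity),
    finrank_euclideanSpace_fin, ← Real.rpow_natCast, ← Real.rpow_mul hcω.le,
    inv_mul_cancel₀ (by exact_mod_cast (by omega : n ≠ 0)), Real.rpow_one, hball,
    ← ENNReal.ofReal_mul hcω.le, div_mul_cancel₀ c omegaN_pos.ne']

lemma isBounded_setOf_omegaN_mul_norm_pow_lt (hn : 1 ≤ n) (c : ℝ) :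
    Bornology.IsBounded {x : En n | omegaN n * ‖x‖ ^ n < c} := by
  have h := setOf_omegaN_mul_norm_pow_lt hn (lt_max_of_lt_right one_pos : (0 : ℝ) < max c 1)
  exact (isBounded_ball.subset h.subset).subset fun x (hx : _ < c) =>
    show _ < max c 1 from lt_max_of_lt_left hx

lemma schwarz_eq_zero_of_support_subset {K : Set (En n)} (hK : Function.support f ⊆ K)
    (hKfin : volume K ≠ ∞) {x : En n} (hx : (volume K).toReal ≤ omegaN n * ‖x‖ ^ n) :
    schwarz f x = 0 :=
  decRearr_eq_zero_of_support_subset hK hKfin hx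

lemma hasCompactSupport_schwarz (hn : 1 ≤ n) (hfc : HasCompactSupport f) :
    HasCompactSupport (schwarz f) :=
  .intro (isBounded_setOf_omegaN_mul_norm_pow_lt hn (volume (tsupport f)).toReal).isCompact_closure
    fun _ hx => schwarz_eq_zero_of_support_subset (subset_tsupport f) hfc.measure_lt_top.ne
      (not_lt.1 fun h => hx (subset_closure h))

lemma setOf_lt_schwarz (hfc : HasCompactSupport f) (hf : BddAbove (range f)) (ht : 0 ≤ t) :
    {x | t < schwarz f x} = {x | omegaN n * ‖x‖ ^ n < distFun f t} :=
  ext fun x => lt_decRearr_iff hfc hf (omegaN_mul_norm_pow_nonneg x) ht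

/-- The superlevel sets of `schwarz f` and `schwarz g` are concentric balls, so they intersect
as much as sets of the given measures can. -/
lemma volume_inter_le_volume_schwarz_inter (hn : 1 ≤ n) (hfc : HasCompactSupport f)
    (hf : BddAbove (range f)) (hgc : HasCompactSupport g) (hg : BddAbove (range g))
    (hs : 0 ≤ s) (ht : 0 ≤ t) :
    volume ({x | s < g x} ∩ {x | t < f x}) ≤
      volume ({x | s < schwarz g x} ∩ {x | t < schwarz f x}) := by
  have hinter : {x : En n | omegaN n * ‖x‖ ^ n < distFun g s} ∩
      {x | omegaN n * ‖x‖ ^ n < distFun f t} =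
      {x | omegaN n * ‖x‖ ^ n < min (distFun g s) (distFun f t)} := by
    ext x
    simp only [mem_inter_iff, mem_ofPred_eq, lt_min_iff]
  rw [setOf_lt_schwarz hgc hg hs, setOf_lt_schwarz hfc hf ht, hinter,
    volume_setOf_omegaN_mul_norm_pow_lt hn, ENNReal.ofReal_min, distFun, distFun,
    ENNReal.ofReal_toReal (volume_setOf_lt_lt_top hgc hs).ne,
    ENNReal.ofReal_toReal (volume_setOf_lt_lt_top hfc ht).ne]
  exact le_min (measure_mono inter_subset_left) (measure_mono inter_subset_right)

end Rearrangement

lemma lintegral_ofReal_mul_ofReal_eq_lintegral_measure_inter {α : Type*} [MeasurableSpace α]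
    (μ : Measure α) {F G : α → ℝ} (hF : Measurable F) (hG : Measurable G) (hF0 : 0 ≤ F)
    (hG0 : 0 ≤ G) :
    ∫⁻ x, ENNReal.ofReal (F x) * ENNReal.ofReal (G x) ∂μ =
      ∫⁻ t in Ioi 0, ∫⁻ s in Ioi 0, μ ({x | s < G x} ∩ {x | t < F x}) := by
  have hGm : Measurable fun x => ENNReal.ofReal (G x) := ENNReal.measurable_ofReal.comp hG
  have hFm : Measurable fun x => ENNReal.ofReal (F x) := ENNReal.measurable_ofReal.comp hF
  calc ∫⁻ x, ENNReal.ofReal (F x) * ENNReal.ofReal (G x) ∂μ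
      = ∫⁻ x, ENNReal.ofReal (F x) ∂μ.withDensity fun x => ENNReal.ofReal (G x) := by
        rw [lintegral_withDensity_eq_lintegral_mul μ hGm hFm]
        simp only [Pi.mul_apply, mul_comm]
    _ = ∫⁻ t in Ioi 0, ∫⁻ s in Ioi 0, μ ({x | s < G x} ∩ {x | t < F x}) := by
        rw [lintegral_eq_lintegral_meas_lt _ (.of_forall hF0) hF.aemeasurable]
        refine setLIntegral_congr_fun measurableSet_Ioi fun t _ => ?_
        have hFt : MeasurableSet {x | t < F x} := measurableSet_lt measurable_const hF
        rw [withDensity_apply _ hFt, lintegral_eq_lintegral_meas_lt _ (.of_forall hG0)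
          hG.aemeasurable]
        refine setLIntegral_congr_fun measurableSet_Ioi fun s _ => ?_
        rw [Measure.restrict_apply (measurableSet_lt measurable_const hG)]

lemma integral_mul_eq_toReal_lintegral {α : Type*} [MeasurableSpace α] [TopologicalSpace α]
    [OpensMeasurableSpace α] (μ : Measure α) {F G : α → ℝ} (hF : Continuous F)
    (hG : Continuous G) (hF0 : 0 ≤ F) (hG0 : 0 ≤ G) :
    ∫ x, F x * G x ∂μ = (∫⁻ x, ENNReal.ofReal (F x) * ENNReal.ofReal (G x) ∂μ).toReal := by
  rw [integral_eq_lintegral_of_nonneg_ae (.of_forall fun x => mul_nonneg (hF0 x) (hG0 x))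
    (hF.mul hG).aestronglyMeasurable]
  simp_rw [ENNReal.ofReal_mul (hF0 _)]

theorem integral_mul_le_integral_schwarz_mul_schwarz {n : ℕ} (hn : 1 ≤ n) {f g : En n → ℝ}
    (hf : Continuous f) (hg : Continuous g) (hf0 : 0 ≤ f) (hg0 : 0 ≤ g)
    (hfc : HasCompactSupport f) (hgc : HasCompactSupport g) :
    ∫ x, f x * g x ≤ ∫ x, schwarz f x * schwarz g x := by
  have hfs := continuous_schwarz hn hf hfc
  have hgs := continuous_schwarz hn hg hgc
  have hfs0 : 0 ≤ schwarz f := fun _ => decRearr_nonneg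
  have hgs0 : 0 ≤ schwarz g := fun _ => decRearr_nonneg
  rw [integral_mul_eq_toReal_lintegral _ hf hg hf0 hg0,
    integral_mul_eq_toReal_lintegral _ hfs hgs hfs0 hgs0]
  refine ENNReal.toReal_mono ?_ ?_
  · simp_rw [← ENNReal.ofReal_mul (hfs0 _)]
    exact ((hfs.mul hgs).integrable_of_hasCompactSupport
      (hasCompactSupport_schwarz hn hfc).mul_right).lintegral_lt_top.ne
  rw [lintegral_ofReal_mul_ofReal_eq_lintegral_measure_inter _ hf.measurable hg.measurable hf0 hg0,
    lintegral_ofReal_mul_ofReal_eq_lintegral_measure_inter _ hfs.measurable hgs.measurable hfs0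
      hgs0]
  refine setLIntegral_mono' measurableSet_Ioi fun t (ht : 0 < t) =>
    setLIntegral_mono' measurableSet_Ioi fun s (hs : 0 < s) => ?_
  exact volume_inter_le_volume_schwarz_inter hn hfc (hf.bddAbove_range_of_hasCompactSupport hfc)
    hgc (hg.bddAbove_range_of_hasCompactSupport hgc) hs.le ht.le

section Steiner

variable {n m : ℕ} {u w : En n × En m → ℝ} {K Ku Kw : ℝ≥0}

lemma hasCompactSupport_slice (huc : HasCompactSupport u) (y : En m) :
    HasCompactSupport fun x => u (x, y) :=
  .intro (huc.isCompact.image continuous_fst) fun x hx =>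
    image_eq_zero_of_notMem_tsupport fun h => hx ⟨(x, y), h, rfl⟩

/-- The Schwarz rearrangement is a contraction in the sup norm, slice by slice. -/
lemma lipschitzWith_steiner_snd (hu : LipschitzWith K u) (huc : HasCompactSupport u)
    (x : En n) : LipschitzWith K fun y => steiner u (x, y) := by
  refine LipschitzWith.of_le_add_mul K fun y y' => ?_
  have hslice := hasCompactSupport_slice huc y'
  refine decRearr_le_decRearr_add hslice
    ((hu.continuous.comp (by fun_prop)).bddAbove_range_of_hasCompactSupport hslice)
    (by positivity) (omegaN_mul_norm_pow_nonneg x) fun x' => ?_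
  have h := hu.dist_le_mul (x', y) (x', y')
  rw [Prod.dist_eq, dist_self, max_eq_right dist_nonneg, Real.dist_eq] at h
  linarith [le_abs_self (u (x', y) - u (x', y'))]

lemma continuous_steiner (hn : 1 ≤ n) (hu : LipschitzWith K u) (huc : HasCompactSupport u) :
    Continuous (steiner u) :=
  continuous_prod_of_continuous_lipschitzWith' _ K (lipschitzWith_steiner_snd hu huc) fun y =>
    continuous_schwarz hn (hu.continuous.comp (by fun_prop)) (hasCompactSupport_slice huc y)

lemma hasCompactSupport_steiner (hn : 1 ≤ n) (huc : HasCompactSupport u) :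
    HasCompactSupport (steiner u) := by
  have hfst : ∀ y, Function.support (fun x => u (x, y)) ⊆ Prod.fst '' tsupport u :=
    fun y x hx => ⟨(x, y), subset_tsupport u hx, rfl⟩
  refine .intro ((isBounded_setOf_omegaN_mul_norm_pow_lt hn
      (volume (Prod.fst '' tsupport u)).toReal).isCompact_closure.prod
      (huc.isCompact.image continuous_snd)) fun ⟨x, y⟩ hz => ?_
  rw [mem_prod, not_and_or] at hz
  rcases hz with hx | hy
  · exact schwarz_eq_zero_of_support_subset (hfst y)
      (huc.isCompact.image continuous_fst).measure_lt_top.ne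
      (not_lt.1 fun h => hx (subset_closure h))
  · refine schwarz_eq_zero_of_support_subset (K := ∅)
      (fun x hx => hy ⟨(x, y), subset_tsupport u hx, rfl⟩) (by simp) ?_
    simpa using omegaN_mul_norm_pow_nonneg x

lemma steiner_comp_add_right (u : En n × En m → ℝ) {a : En n × En m} (ha : a.1 = 0) :
    steiner (fun z => u (z + a)) = fun z => steiner u (z + a) := by
  obtain ⟨a₁, a₂⟩ := a
  subst ha
  ext z
  simp [steiner]

theorem integral_mul_le_integral_steiner_mul_steiner (hn : 1 ≤ n) (hu : LipschitzWith Ku u)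
    (hw : LipschitzWith Kw w) (hu0 : 0 ≤ u) (hw0 : 0 ≤ w) (huc : HasCompactSupport u)
    (hwc : HasCompactSupport w) :
    ∫ z, u z * w z ≤ ∫ z, steiner u z * steiner w z := by
  have hint : Integrable (fun z => u z * w z) (volume.prod volume) :=
    (hu.continuous.mul hw.continuous).integrable_of_hasCompactSupport huc.mul_right
  have hint' : Integrable (fun z => steiner u z * steiner w z) (volume.prod volume) :=
    ((continuous_steiner hn hu huc).mul (continuous_steiner hn hw hwc)
      ).integrable_of_hasCompactSupport (hasCompactSupport_steiner hn huc).mul_right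
  rw [Measure.volume_eq_prod, integral_prod_symm _ hint, integral_prod_symm _ hint']
  refine integral_mono hint.integral_prod_right hint'.integral_prod_right fun y => ?_
  exact integral_mul_le_integral_schwarz_mul_schwarz hn (hu.continuous.comp (by fun_prop))
    (hw.continuous.comp (by fun_prop)) (fun x => hu0 _) (fun x => hw0 _)
    (hasCompactSupport_slice huc y) (hasCompactSupport_slice hwc y)

lemma integral_comp_add_mul_le_integral_steiner (hn : 1 ≤ n) (hu : LipschitzWith Ku u)
    (hw : LipschitzWith Kw w) (hu0 : 0 ≤ u) (hw0 : 0 ≤ w) (huc : HasCompactSupport u)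
    (hwc : HasCompactSupport w) {a : En n × En m} (ha : a.1 = 0) :
    ∫ z, u (z + a) * w z ≤ ∫ z, steiner u (z + a) * steiner w z := by
  have h := integral_mul_le_integral_steiner_mul_steiner (u := fun z => u (z + a)) hn
    (hu.comp (isometry_add_right a).lipschitz) hw (fun z => hu0 (z + a)) hw0
    (huc.comp_homeomorph (Homeomorph.addRight a)) hwc
  rwa [steiner_comp_add_right u ha] at h

end Steiner

lemma integral_sub_mul_sub_eq {G : Type*} [NormedAddCommGroup G] [MeasurableSpace G]
    [BorelSpace G] {μ : Measure G} [μ.IsAddHaarMeasure] {U W : G → ℝ} (hU : Continuous U)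
    (hW : Continuous W) (hUc : HasCompactSupport U) (a : G) :
    ∫ z, (U (z + a) - U z) * (W (z + a) - W z) ∂μ =
      2 * ∫ z, U z * W z ∂μ - ∫ z, U (z + a) * W z ∂μ - ∫ z, U (z - a) * W z ∂μ := by
  have hint : ∀ b c : G, Integrable (fun z => U (z + b) * W (z + c)) μ := fun b c =>
    ((hU.comp (continuous_add_const b)).mul (hW.comp (continuous_add_const c))
      ).integrable_of_hasCompactSupport (hUc.comp_homeomorph (Homeomorph.addRight b)).mul_right
  have hexpand : ∀ z, (U (z + a) - U z) * (W (z + a) - W z) =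
      (U (z + a) * W (z + a) + U (z + 0) * W (z + 0)) -
        (U (z + a) * W (z + 0) + U (z + 0) * W (z + a)) := fun z => by
    simp only [add_zero]; ring
  simp_rw [hexpand]
  rw [integral_sub, integral_add (hint a a) (hint 0 0), integral_add (hint a 0) (hint 0 a)]
  · simp only [add_zero]
    rw [integral_add_right_eq_self (fun z => U z * W z) a,
      ← integral_add_right_eq_self (fun z => U (z - a) * W z) a]
    simp only [add_sub_cancel_right]
    ring
  exacts [(hint a a).add (hint 0 0), (hint a 0).add (hint 0 a)]

section LineDerivative

variable {E : Type*} [NormedAddCommGroup E] [NormedSpace ℝ E] {U W : E → ℝ} {v : E} {C D : ℝ≥0}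

lemma LipschitzWith.comp_add_smul {K : ℝ≥0} (hU : LipschitzWith K U) (p v : E) :
    LipschitzWith (K * ‖v‖₊) fun t : ℝ => U (p + t • v) :=
  LipschitzWith.of_dist_le_mul fun t s => by
    calc dist (U (p + t • v)) (U (p + s • v)) ≤ K * dist (p + t • v) (p + s • v) :=
          hU.dist_le_mul _ _
      _ = K * ‖v‖₊ * dist t s := by
          rw [dist_add_left, dist_eq_norm, ← sub_smul, norm_smul, Real.dist_eq, Real.norm_eq_abs]
          push_cast
          ring

lemma norm_inv_smul_sub_le_of_lipschitzWith_along
    (hUv : ∀ p, LipschitzWith C fun t : ℝ => U (p + t • v)) (z : E) {t : ℝ} (ht : t ≠ 0) :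
    ‖t⁻¹ • (U (z + t • v) - U z)‖ ≤ C := by
  have h := (hUv z).dist_le_mul t 0
  rw [zero_smul, add_zero, dist_eq_norm, Real.dist_eq, sub_zero] at h
  rw [norm_smul, norm_inv, Real.norm_eq_abs, inv_mul_le_iff₀ (abs_pos.2 ht), mul_comm]
  exact h

variable [MeasurableSpace E] [BorelSpace E] [FiniteDimensional ℝ E] {μ : Measure E}
  [μ.IsAddHaarMeasure]

/-- Rademacher on each line `p + ℝ v`, then disintegrate `μ` along these lines. -/
lemma ae_lineDifferentiableAt_of_lipschitzWith_along (hU : Continuous U)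
    (hUv : ∀ p, LipschitzWith C fun t : ℝ => U (p + t • v)) :
    ∀ᵐ p ∂μ, LineDifferentiableAt ℝ U p v := by
  refine ae_mem_of_ae_add_linearMap_mem
    (ContinuousLinearMap.smulRight (1 : ℝ →L[ℝ] ℝ) v).toLinearMap
    volume μ (measurableSet_lineDifferentiableAt hU) fun p => ?_
  filter_upwards [(hUv p).ae_differentiableAt_real] with s hs
  have hshift : (fun t : ℝ => U (p + s • v + t • v)) = (fun t => U (p + t • v)) ∘ (s + ·) := by
    ext t
    simp only [Function.comp_apply, add_smul, add_assoc]
  show DifferentiableAt ℝ (fun t : ℝ => U (p + s • v + t • v)) 0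
  rw [hshift]
  exact (add_zero s ▸ hs).comp 0 (differentiableAt_id.const_add s)

theorem tendsto_integral_sub_mul_sub_div_sq (hU : Continuous U) (hW : Continuous W)
    (hUc : HasCompactSupport U) (hUv : ∀ p, LipschitzWith C fun t : ℝ => U (p + t • v))
    (hWv : ∀ p, LipschitzWith D fun t : ℝ => W (p + t • v)) :
    Tendsto (fun t : ℝ => (t ^ 2)⁻¹ * ∫ z, (U (z + t • v) - U z) * (W (z + t • v) - W z) ∂μ)
      (𝓝[>] 0) (𝓝 (∫ z, lineDeriv ℝ U z v * lineDeriv ℝ W z v ∂μ)) := by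
  have hslopes : ∀ t : ℝ,
      ∫ z, t⁻¹ • (U (z + t • v) - U z) * t⁻¹ • (W (z + t • v) - W z) ∂μ =
        (t ^ 2)⁻¹ * ∫ z, (U (z + t • v) - U z) * (W (z + t • v) - W z) ∂μ := fun t => by
    rw [← integral_const_mul]
    congr 1 with z
    simp only [smul_eq_mul]
    ring
  refine Tendsto.congr hslopes ?_
  let S := cthickening ‖v‖ (tsupport U)
  have hS : IsCompact S := hUc.cthickening
  refine tendsto_integral_filter_of_dominated_convergence (S.indicator fun _ => (C * D : ℝ))
    (.of_forall fun t => Continuous.aestronglyMeasurable (by fun_prop)) ?_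
    ((integrable_indicator_iff hS.measurableSet).2 (integrableOn_const hS.measure_lt_top.ne)) ?_
  · filter_upwards [Ioc_mem_nhdsGT zero_lt_one] with t ⟨ht0, ht1⟩
    refine .of_forall fun z => ?_
    by_cases hz : z ∈ S
    · rw [indicator_of_mem hz, norm_mul]
      exact mul_le_mul (norm_inv_smul_sub_le_of_lipschitzWith_along hUv z ht0.ne')
        (norm_inv_smul_sub_le_of_lipschitzWith_along hWv z ht0.ne') (norm_nonneg _) C.coe_nonneg
    · have h₀ : U z = 0 :=
        image_eq_zero_of_notMem_tsupport fun h => hz (self_subset_cthickening _ h)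
      have h₁ : U (z + t • v) = 0 := image_eq_zero_of_notMem_tsupport fun h => hz <|
        mem_cthickening_of_dist_le _ _ _ _ h <| by
          rw [dist_eq_norm, sub_add_cancel_left, norm_neg, norm_smul, Real.norm_eq_abs,
            abs_of_pos ht0]
          exact mul_le_of_le_one_left (norm_nonneg v) ht1
      simp [h₀, h₁, indicator_of_notMem hz]
  · filter_upwards [ae_lineDifferentiableAt_of_lipschitzWith_along hU hUv,
      ae_lineDifferentiableAt_of_lipschitzWith_along hW hWv] with z hzU hzW
    exact hzU.hasLineDerivAt.tendsto_slope_zero_right.mul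
      hzW.hasLineDerivAt.tendsto_slope_zero_right

end LineDerivative

section PartialDerivative

variable {n m : ℕ} {u w : En n × En m → ℝ} {Ku Kw : ℝ≥0}

lemma add_zero_mk (z : En n × En m) (c : En m) : z + (0, c) = (z.1, z.2 + c) :=
  Prod.ext (add_zero z.1) rfl

lemma dery_eq_lineDeriv (F : En n × En m → ℝ) (i : Fin m) (z : En n × En m) :
    dery F i z = lineDeriv ℝ F z (0, EuclideanSpace.single i 1) := by
  simp only [dery, lineDeriv, Prod.smul_mk, smul_zero, add_zero_mk]

theorem integral_dery_steiner_mul_le (hn : 1 ≤ n) (hu : LipschitzWith Ku u)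
    (hw : LipschitzWith Kw w) (hu0 : 0 ≤ u) (hw0 : 0 ≤ w) (huc : HasCompactSupport u)
    (hwc : HasCompactSupport w) (heq : ∫ z, u z * w z = ∫ z, steiner u z * steiner w z)
    (i : Fin m) :
    ∫ z, dery (steiner u) i z * dery (steiner w) i z ≤ ∫ z, dery u i z * dery w i z := by
  simp only [dery_eq_lineDeriv]
  set e : En m := EuclideanSpace.single i 1
  set v : En n × En m := (0, e)
  have hsteiner_v : ∀ {F : En n × En m → ℝ} {K : ℝ≥0}, LipschitzWith K F → HasCompactSupport F →
      ∀ p, LipschitzWith (K * ‖e‖₊) fun t : ℝ => steiner F (p + t • v) := fun hF hFc p => by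
    simpa only [v, Prod.smul_mk, smul_zero, add_zero_mk] using
      (lipschitzWith_steiner_snd hF hFc p.1).comp_add_smul p.2 e
  have : (volume : Measure (En n × En m)).IsAddHaarMeasure := Measure.prod.instIsAddHaarMeasure _ _
  refine le_of_tendsto_of_tendsto
    (tendsto_integral_sub_mul_sub_div_sq (continuous_steiner hn hu huc)
      (continuous_steiner hn hw hwc) (hasCompactSupport_steiner hn huc) (hsteiner_v hu huc)
      (hsteiner_v hw hwc))
    (tendsto_integral_sub_mul_sub_div_sq hu.continuous hw.continuous huc (hu.comp_add_smul · v)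
      (hw.comp_add_smul · v)) (Eventually.of_forall fun t => ?_)
  refine mul_le_mul_of_nonneg_left ?_ (by positivity)
  rw [integral_sub_mul_sub_eq hu.continuous hw.continuous huc,
    integral_sub_mul_sub_eq (continuous_steiner hn hu huc) (continuous_steiner hn hw hwc)
      (hasCompactSupport_steiner hn huc)]
  have hadd : ∫ z, u (z + t • v) * w z ≤ ∫ z, steiner u (z + t • v) * steiner w z :=
    integral_comp_add_mul_le_integral_steiner hn hu hw hu0 hw0 huc hwc (by simp [v])
  have hsub : ∫ z, u (z - t • v) * w z ≤ ∫ z, steiner u (z - t • v) * steiner w z := by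
    simpa only [← sub_eq_add_neg] using
      integral_comp_add_mul_le_integral_steiner hn hu hw hu0 hw0 huc hwc (a := -(t • v))
        (by simp [v])
  linarith

end PartialDerivative

lemma schwarz_eq_zero_of_dim_zero (f : En 0 → ℝ) : schwarz f = 0 :=
  funext fun _ => schwarz_eq_zero_of_support_subset (K := ball 0 1)
    (fun y _ => by simp [Subsingleton.elim y 0]) measure_ball_lt_top.ne (by simp [omegaN])

lemma steiner_eq_zero_of_dim_zero {m : ℕ} (u : En 0 × En m → ℝ) : steiner u = 0 :=
  funext fun z => congrFun (schwarz_eq_zero_of_dim_zero _) z.1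

/-- Where `f > 0` the function `g` vanishes nearby; where `f = 0` it has a minimum. -/
lemma deriv_mul_deriv_eq_zero_of_mul_eq_zero {f g : ℝ → ℝ} {x : ℝ} (hf : ContinuousAt f x)
    (hf0 : 0 ≤ f) (hfg : ∀ t, f t * g t = 0) : deriv f x * deriv g x = 0 := by
  rcases (hf0 x).eq_or_lt with hx | hx
  · have hmin : IsLocalMin f x := .of_forall fun t => hx ▸ hf0 t
    rw [hmin.deriv_eq_zero, zero_mul]
  · have hg : g =ᶠ[𝓝 x] fun _ => 0 := (hf.eventually (lt_mem_nhds hx)).mono fun t ht =>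
      (mul_eq_zero.1 (hfg t)).resolve_left ht.ne'
    rw [hg.deriv_eq, deriv_const, mul_zero]

theorem integral_dery_steiner_mul_le_of_dim_zero {m : ℕ} {u w : En 0 × En m → ℝ}
    (hu : Continuous u) (hw : Continuous w) (hu0 : 0 ≤ u) (hw0 : 0 ≤ w)
    (huc : HasCompactSupport u) (heq : ∫ z, u z * w z = ∫ z, steiner u z * steiner w z)
    (i : Fin m) :
    ∫ z, dery (steiner u) i z * dery (steiner w) i z ≤ ∫ z, dery u i z * dery w i z := by
  have hint : Integrable (fun z => u z * w z) volume :=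
    (hu.mul hw).integrable_of_hasCompactSupport huc.mul_right
  have huw : ∀ z, u z * w z = 0 := by
    simp only [steiner_eq_zero_of_dim_zero u, Pi.zero_apply, zero_mul, integral_zero] at heq
    exact congrFun ((hu.mul hw).ae_eq_iff_eq volume continuous_const |>.1
      ((integral_eq_zero_iff_of_nonneg (fun z => mul_nonneg (hu0 z) (hw0 z)) hint).1 heq))
  have hderiv : ∀ z, dery u i z * dery w i z = 0 := fun z =>
    deriv_mul_deriv_eq_zero_of_mul_eq_zero (by fun_prop) (fun _ => hu0 _) fun _ => huw _
  have hderiv_steiner : ∀ z, dery (steiner u) i z * dery (steiner w) i z = 0 := fun z => by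
    simp [steiner_eq_zero_of_dim_zero, dery]
  simp only [hderiv, hderiv_steiner, integral_zero, le_refl]

/-- two-function Pólya–Szegő inequality for the y-partial derivatives under
Steiner symmetrization, assuming equality in the Hardy–Littlewood inequality. -/
theorem polya_szego_two_fun_y {n m : ℕ} (u w : En n × En m → ℝ)
    (hul : ∃ K, LipschitzWith K u) (hwl : ∃ K, LipschitzWith K w)
    (huc : HasCompactSupport u) (hwc : HasCompactSupport w)
    (hupos : ∀ z, 0 ≤ u z) (hwpos : ∀ z, 0 ≤ w z)
    (heq : ∫ z : En n × En m, u z * w z = ∫ z : En n × En m, steiner u z * steiner w z) :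
    ∀ i : Fin m,
      ∫ z : En n × En m, dery u i z * dery w i z ≥
        ∫ z : En n × En m, dery (steiner u) i z * dery (steiner w) i z := by
  intro i
  obtain ⟨Ku, hu⟩ := hul
  obtain ⟨Kw, hw⟩ := hwl
  rcases Nat.eq_zero_or_pos n with rfl | hn
  · exact integral_dery_steiner_mul_le_of_dim_zero hu.continuous hw.continuous hupos hwpos huc heq i
  · exact integral_dery_steiner_mul_le hn hu hw hupos hwpos huc hwc heq i
end
end
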